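/- Let c be a real constant with ν_obs + c > 0 and define the single-imputation variance estimator under ML imputation σ̂²_SI,M = σ²·(U_obs/(n − 1))·(1 + (U_imp + (n_obs/n)·n_mis·Z̄_imp²)/(ν_obs + c)). Then E[σ̂²_SI,M] − σ² = −σ²·n_mis·(c·n + n_obs − 1)/((n − 1)·n·(c + n_obs − 1)). -/

import Mathlib

/-!
The estimator is `U_obs` times an affine function of `U_imp` and `Z_imp²`, and `U_obs` is
independent of each of these, so its mean factorizes into `E U_obs = n_obs - 1`,
`E U_imp = n_mis - 1` and `E Z_imp² = 1 / n_mis`. The Gamma mean `a / r` comes from the identity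
`x · γ_{a,r}(x) = (a / r) · γ_{a+1,r}(x)` between Gamma densities.
-/

open MeasureTheory ProbabilityTheory NNReal

namespace ProbabilityTheory

section Gamma

variable {a r : ℝ}

lemma measurable_gammaPDF : Measurable (gammaPDF a r) :=
  (measurable_gammaPDFReal a r).ennreal_ofReal

lemma toReal_gammaPDF (ha : 0 < a) (hr : 0 < r) (x : ℝ) :
    (gammaPDF a r x).toReal = gammaPDFReal a r x :=
  ENNReal.toReal_ofReal (gammaPDFReal_nonneg ha hr x)

lemma integrable_gammaMeasure_iff (ha : 0 < a) (hr : 0 < r) {g : ℝ → ℝ} :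
    Integrable g (gammaMeasure a r) ↔ Integrable (fun x ↦ gammaPDFReal a r x * g x) := by
  rw [gammaMeasure, integrable_withDensity_iff_integrable_smul'
    measurable_gammaPDF (ae_of_all _ fun _ ↦ ENNReal.ofReal_lt_top)]
  simp only [toReal_gammaPDF ha hr, smul_eq_mul]

lemma integral_gammaMeasure (ha : 0 < a) (hr : 0 < r) (g : ℝ → ℝ) :
    ∫ x, g x ∂gammaMeasure a r = ∫ x, gammaPDFReal a r x * g x := by
  rw [gammaMeasure, integral_withDensity_eq_integral_toReal_smul
    measurable_gammaPDF (ae_of_all _ fun _ ↦ ENNReal.ofReal_lt_top)]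
  simp only [toReal_gammaPDF ha hr, smul_eq_mul]

lemma mul_gammaPDFReal (ha : 0 < a) (hr : 0 < r) (x : ℝ) :
    x * gammaPDFReal a r x = a / r * gammaPDFReal (a + 1) r x := by
  unfold gammaPDFReal
  split_ifs with hx
  · have hxa : x ^ a = x ^ (a - 1) * x := by
      simpa using Real.rpow_add_one' hx (by simpa using ha.ne' : a - 1 + 1 ≠ 0)
    rw [Real.Gamma_add_one ha.ne', Real.rpow_add_one hr.ne', add_sub_cancel_right, hxa]
    field_simp
  · simp

lemma integrable_id_gammaMeasure (ha : 0 < a) (hr : 0 < r) :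
    Integrable id (gammaMeasure a r) := by
  have := isProbabilityMeasure_gammaMeasure (add_pos ha one_pos) hr
  have h := (integrable_gammaMeasure_iff (add_pos ha one_pos) hr).1 (integrable_const (1 : ℝ))
  rw [integrable_gammaMeasure_iff ha hr]
  simpa only [id, mul_comm (gammaPDFReal a r _), mul_gammaPDFReal ha hr, mul_one]
    using h.const_mul (a / r)

lemma integral_id_gammaMeasure (ha : 0 < a) (hr : 0 < r) :
    ∫ x, x ∂gammaMeasure a r = a / r := by
  have := isProbabilityMeasure_gammaMeasure (add_pos ha one_pos) hr
  calc ∫ x, x ∂gammaMeasure a r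
      = a / r * ∫ x, gammaPDFReal (a + 1) r x * 1 := by
        simp_rw [integral_gammaMeasure ha hr, mul_comm (gammaPDFReal a r _),
          mul_gammaPDFReal ha hr, mul_one, integral_const_mul]
    _ = a / r := by
        rw [← integral_gammaMeasure (add_pos ha one_pos) hr, integral_const, probReal_univ,
          smul_eq_mul, mul_one, mul_one]

end Gamma

lemma integral_sq_gaussianReal (m : ℝ) (v : ℝ≥0) :
    ∫ x, x ^ 2 ∂gaussianReal m v = v + m ^ 2 := by
  have h := variance_eq_sub (memLp_id_gaussianReal (μ := m) (v := v) 2)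
  rw [variance_id_gaussianReal] at h
  simp only [Pi.pow_apply, id_eq, integral_id_gaussianReal] at h
  linarith

section RandomVariables

variable {Ω : Type*} {mΩ : MeasurableSpace Ω} {P : Measure Ω}

lemma HasLaw.integrable_comp {𝓧 E : Type*} {m𝓧 : MeasurableSpace 𝓧} [NormedAddCommGroup E]
    {μ : Measure 𝓧} {X : Ω → 𝓧} (hX : HasLaw X μ P) {f : 𝓧 → E} (hf : Integrable f μ) :
    Integrable (f ∘ X) P := by
  rw [← hX.map_eq] at hf
  exact (integrable_map_measure hf.1 hX.aemeasurable).1 hf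

lemma HasLaw.integrable_and_integral_of_gammaMeasure {U : Ω → ℝ} {a r : ℝ} (ha : 0 < a)
    (hr : 0 < r) (hU : HasLaw U (gammaMeasure a r) P) :
    Integrable U P ∧ P[U] = a / r :=
  ⟨hU.integrable_comp (integrable_id_gammaMeasure ha hr),
    hU.integral_eq.trans (integral_id_gammaMeasure ha hr)⟩

lemma HasLaw.integrable_sq_and_integral_sq_of_gaussianReal {Z : Ω → ℝ} {m : ℝ} {v : ℝ≥0}
    (hZ : HasLaw Z (gaussianReal m v) P) :
    Integrable (fun ω ↦ Z ω ^ 2) P ∧ ∫ ω, Z ω ^ 2 ∂P = v + m ^ 2 :=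
  ⟨hZ.integrable_comp (f := fun x ↦ x ^ 2) (memLp_id_gaussianReal 2).integrable_sq,
    (hZ.integral_comp (f := fun x ↦ x ^ 2) (by fun_prop)).trans (integral_sq_gaussianReal m v)⟩

lemma integral_mul_one_add_div_of_indepFun {X Y Z : Ω → ℝ} (hXY : X ⟂ᵢ[P] Y)
    (hXZ : X ⟂ᵢ[P] Z) (hX : Integrable X P) (hY : Integrable Y P) (hZ : Integrable Z P)
    (a b : ℝ) :
    ∫ ω, X ω * (1 + (Y ω + a * Z ω) / b) ∂P = P[X] * (1 + (P[Y] + a * P[Z]) / b) := by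
  have hexpand : (fun ω ↦ X ω * (1 + (Y ω + a * Z ω) / b))
      = fun ω ↦ X ω + (b⁻¹ * (X ω * Y ω) + a / b * (X ω * Z ω)) := by
    funext ω; ring
  have hXY' : Integrable (fun ω ↦ X ω * Y ω) P := hXY.integrable_mul hX hY
  have hXZ' : Integrable (fun ω ↦ X ω * Z ω) P := hXZ.integrable_mul hX hZ
  have hsum : Integrable (fun ω ↦ b⁻¹ * (X ω * Y ω) + a / b * (X ω * Z ω)) P :=
    (hXY'.const_mul _).add (hXZ'.const_mul _)
  rw [hexpand, integral_add hX hsum, integral_add (hXY'.const_mul _) (hXZ'.const_mul _),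
    integral_const_mul, integral_const_mul, hXY.integral_fun_mul_eq_mul_integral hX.1 hY.1,
    hXZ.integral_fun_mul_eq_mul_integral hX.1 hZ.1]
  ring

end RandomVariables

end ProbabilityTheory

theorem stmt7_general
    {Ω : Type*} [MeasurableSpace Ω] (P : Measure Ω)
    (σ : ℝ)
    (n_obs n_mis : ℕ) (hnobs : 2 ≤ n_obs) (hnmis : 2 ≤ n_mis)
    (U_obs Z_obs Z_imp U_imp : Ω → ℝ)
    (hUmeas : Measurable U_obs)
    (hZimpmeas : Measurable Z_imp) (hUimpmeas : Measurable U_imp)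
    (hU : P.map U_obs = gammaMeasure (((n_obs : ℝ) - 1) / 2) (1 / 2))
    (hZimp : P.map Z_imp = gaussianReal 0 (1 / (n_mis : ℝ≥0)))
    (hUimp : P.map U_imp = gammaMeasure (((n_mis : ℝ) - 1) / 2) (1 / 2))
    (hindep : iIndepFun ![U_obs, Z_obs, Z_imp, U_imp] P)
    (c : ℝ) (hc : 0 < ((n_obs : ℝ) - 1) + c) :
    (∫ ω, σ ^ 2 * (U_obs ω / (((n_obs : ℝ) + (n_mis : ℝ)) - 1))
        * (1 + (U_imp ω + ((n_obs : ℝ) / ((n_obs : ℝ) + (n_mis : ℝ)))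
            * (n_mis : ℝ) * Z_imp ω ^ 2) / (((n_obs : ℝ) - 1) + c)) ∂P) - σ ^ 2
      = -σ ^ 2 * ((n_mis : ℝ) * (c * ((n_obs : ℝ) + (n_mis : ℝ)) + (n_obs : ℝ) - 1))
          / ((((n_obs : ℝ) + (n_mis : ℝ)) - 1) * ((n_obs : ℝ) + (n_mis : ℝ))
              * (c + (n_obs : ℝ) - 1)) := by
  have hno : (2 : ℝ) ≤ n_obs := by exact_mod_cast hnobs
  have hnm : (2 : ℝ) ≤ n_mis := by exact_mod_cast hnmis
  obtain ⟨hUobs_int, hUobs_mean⟩ := HasLaw.integrable_and_integral_of_gammaMeasure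
    (by linarith) (by norm_num) ⟨hUmeas.aemeasurable, hU⟩
  obtain ⟨hUimp_int, hUimp_mean⟩ := HasLaw.integrable_and_integral_of_gammaMeasure
    (by linarith) (by norm_num) ⟨hUimpmeas.aemeasurable, hUimp⟩
  obtain ⟨hZimp_int, hZimp_mean⟩ :=
    HasLaw.integrable_sq_and_integral_sq_of_gaussianReal ⟨hZimpmeas.aemeasurable, hZimp⟩
  have hUobs_Uimp : U_obs ⟂ᵢ[P] U_imp := hindep.indepFun (i := 0) (j := 3) (by decide)
  have hUobs_Zimp : U_obs ⟂ᵢ[P] fun ω ↦ Z_imp ω ^ 2 :=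
    (hindep.indepFun (i := 0) (j := 2) (by decide)).comp measurable_id (measurable_id.pow_const 2)
  set N : ℝ := (n_obs : ℝ) + n_mis
  set k : ℝ := (n_obs : ℝ) / N * n_mis
  have hfactor : ∀ ω,
      σ ^ 2 * (U_obs ω / (N - 1)) * (1 + (U_imp ω + k * Z_imp ω ^ 2) / (n_obs - 1 + c))
        = σ ^ 2 / (N - 1) * (U_obs ω * (1 + (U_imp ω + k * Z_imp ω ^ 2) / (n_obs - 1 + c))) := by
    intro ω; ring
  simp_rw [hfactor]
  rw [integral_const_mul, integral_mul_one_add_div_of_indepFun hUobs_Uimp hUobs_Zimp hUobs_int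
    hUimp_int hZimp_int, hUobs_mean, hUimp_mean, hZimp_mean]
  have hN : (n_obs : ℝ) + n_mis - 1 ≠ 0 := by linarith
  have hN' : (n_obs : ℝ) + n_mis ≠ 0 := by linarith
  have hd : c + n_obs - 1 ≠ 0 := by linarith
  simp only [N, k]
  push_cast
  field_simp
  ring

/-- bias of the single-imputation variance estimator under ML imputation
`σ̂²_SI,M = σ²·(U_obs/(n−1))·(1 + (U_imp + (n_obs/n)·n_mis·Z̄_imp²)/(ν_obs + c))`. -/
theorem stmt7
    {Ω : Type*} [MeasurableSpace Ω] (P : Measure Ω) [IsProbabilityMeasure P]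
    (μ σ : ℝ) (hσ : 0 < σ)
    (n_obs n_mis : ℕ) (hnobs : 2 ≤ n_obs) (hnmis : 2 ≤ n_mis)
    (U_obs Z_obs Z_imp U_imp : Ω → ℝ)
    (hUmeas : Measurable U_obs) (hZmeas : Measurable Z_obs)
    (hZimpmeas : Measurable Z_imp) (hUimpmeas : Measurable U_imp)
    (hU : P.map U_obs = gammaMeasure (((n_obs : ℝ) - 1) / 2) (1 / 2))
    (hZ : P.map Z_obs = gaussianReal 0 (1 / (n_obs : ℝ≥0)))
    (hZimp : P.map Z_imp = gaussianReal 0 (1 / (n_mis : ℝ≥0)))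
    (hUimp : P.map U_imp = gammaMeasure (((n_mis : ℝ) - 1) / 2) (1 / 2))
    (hindep : iIndepFun ![U_obs, Z_obs, Z_imp, U_imp] P)
    (c : ℝ) (hc : 0 < ((n_obs : ℝ) - 1) + c) :
    (∫ ω, σ ^ 2 * (U_obs ω / (((n_obs : ℝ) + (n_mis : ℝ)) - 1))
        * (1 + (U_imp ω + ((n_obs : ℝ) / ((n_obs : ℝ) + (n_mis : ℝ)))
            * (n_mis : ℝ) * Z_imp ω ^ 2) / (((n_obs : ℝ) - 1) + c)) ∂P) - σ ^ 2
      = -σ ^ 2 * ((n_mis : ℝ) * (c * ((n_obs : ℝ) + (n_mis : ℝ)) + (n_obs : ℝ) - 1))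
          / ((((n_obs : ℝ) + (n_mis : ℝ)) - 1) * ((n_obs : ℝ) + (n_mis : ℝ))
              * (c + (n_obs : ℝ) - 1)) :=
  stmt7_general P σ n_obs n_mis hnobs hnmis U_obs Z_obs Z_imp U_imp hUmeas hZimpmeas hUimpmeas hU
    hZimp hUimp hindep c hc
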